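/- arXiv:2410.04969 — 2 statements merged into one kernel-verified Lean document; each statement's English description precedes it below -/
import Mathlib

section
/- The ℂ-vector space of homogeneous polynomials of degree 3 in ℂ[x,y,z] that vanish at the nine projective points [0:2:1], [4:0:1], [−2:3:1], [0:1:1], [1:0:1], [1:1:0], [1:9:4], [4:9:1], [4:1:1] has dimension 2. -/
open MvPolynomial

noncomputable section

/-- The conic `Q = x² + y² + z² − 2xy − 2xz − 2yz`. -/
def Q : MvPolynomial (Fin 3) ℂ :=
  X 0 ^ 2 + X 1 ^ 2 + X 2 ^ 2 - 2 * X 0 * X 1 - 2 * X 0 * X 2 - 2 * X 1 * X 2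

/-- Coordinates of the nine points. -/
def pts : Fin 9 → (Fin 3 → ℂ) :=
  ![![0, 2, 1], ![4, 0, 1], ![(-2), 3, 1], ![0, 1, 1], ![1, 0, 1], ![1, 1, 0], ![1, 9, 4], ![4, 9, 1], ![4, 1, 1]]

/-!
The nine points lie on the cubics `Q · (x + 2y − 4z)` and `(x − y + 2z)(x + y − z)(x − 4z)`,
whose values at `[1:0:0]` and `[0:1:0]` are `(1, 2)` and `(1, 0)`. Conversely, a cubic through
the nine points that also vanishes at `[1:0:0]` and `[0:1:0]` is zero: these eleven points
impose ten independent linear conditions on the ten coefficients of a cubic. So evaluation at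
`[1:0:0]` and `[0:1:0]` maps the cubics through the nine points isomorphically onto `ℂ²`.
-/

theorem MvPolynomial.IsHomogeneous.eq_sum_antidiagonalTuple {R : Type*} [CommSemiring R]
    {k n : ℕ} {p : MvPolynomial (Fin k) R} (hp : p.IsHomogeneous n) :
    p = ∑ e ∈ Finset.Nat.antidiagonalTuple k n,
      monomial (Finsupp.equivFunOnFinite.symm e) (coeff (Finsupp.equivFunOnFinite.symm e) p) := by
  calc p = ∑ d ∈ p.support, monomial d (coeff d p) := p.as_sum
    _ = ∑ d ∈ (Finset.Nat.antidiagonalTuple k n).map Finsupp.equivFunOnFinite.symm.toEmbedding,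
          monomial d (coeff d p) := by
      refine Finset.sum_subset (fun d hd => ?_) (fun d _ hd => ?_)
      · have hdeg := hp (mem_support_iff.mp hd)
        simp [Finset.Nat.mem_antidiagonalTuple, ← hdeg, Finsupp.weight_apply, Finsupp.sum_fintype]
      · rw [notMem_support_iff.mp hd, monomial_zero]
    _ = _ := Finset.sum_map _ _ _

theorem Finset.Nat.antidiagonalTuple_three_three : antidiagonalTuple 3 3 =
    {![3, 0, 0], ![2, 1, 0], ![2, 0, 1], ![1, 2, 0], ![1, 1, 1], ![1, 0, 2], ![0, 3, 0],
      ![0, 2, 1], ![0, 1, 2], ![0, 0, 3]} := by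
  decide

theorem MvPolynomial.IsHomogeneous.eval_ternary_cubic {R : Type*} [CommSemiring R]
    {p : MvPolynomial (Fin 3) R} (hp : p.IsHomogeneous 3) (a b c : R) :
    eval ![a, b, c] p =
      coeff (Finsupp.equivFunOnFinite.symm ![3, 0, 0]) p * a ^ 3 +
      coeff (Finsupp.equivFunOnFinite.symm ![2, 1, 0]) p * a ^ 2 * b +
      coeff (Finsupp.equivFunOnFinite.symm ![2, 0, 1]) p * a ^ 2 * c +
      coeff (Finsupp.equivFunOnFinite.symm ![1, 2, 0]) p * a * b ^ 2 +
      coeff (Finsupp.equivFunOnFinite.symm ![1, 1, 1]) p * a * b * c +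
      coeff (Finsupp.equivFunOnFinite.symm ![1, 0, 2]) p * a * c ^ 2 +
      coeff (Finsupp.equivFunOnFinite.symm ![0, 3, 0]) p * b ^ 3 +
      coeff (Finsupp.equivFunOnFinite.symm ![0, 2, 1]) p * b ^ 2 * c +
      coeff (Finsupp.equivFunOnFinite.symm ![0, 1, 2]) p * b * c ^ 2 +
      coeff (Finsupp.equivFunOnFinite.symm ![0, 0, 3]) p * c ^ 3 := by
  conv_lhs => rw [hp.eq_sum_antidiagonalTuple, Finset.Nat.antidiagonalTuple_three_three]
  simp [Finset.sum_insert, eval_monomial, Finsupp.prod_fintype, Fin.prod_univ_three, mul_assoc,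
    add_assoc]

def linearForm (a b c : ℂ) : MvPolynomial (Fin 3) ℂ := C a * X 0 + C b * X 1 + C c * X 2

theorem isHomogeneous_linearForm (a b c : ℂ) : (linearForm a b c).IsHomogeneous 1 :=
  ((isHomogeneous_C_mul_X a 0).add (isHomogeneous_C_mul_X b 1)).add (isHomogeneous_C_mul_X c 2)

@[simp]
theorem eval_linearForm (a b c : ℂ) (x : Fin 3 → ℂ) :
    eval x (linearForm a b c) = a * x 0 + b * x 1 + c * x 2 := by
  simp [linearForm]

theorem isHomogeneous_Q : Q.IsHomogeneous 2 := by
  have hX := isHomogeneous_X ℂ (σ := Fin 3)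
  have hXX : ∀ i j, (2 * X i * X j : MvPolynomial (Fin 3) ℂ).IsHomogeneous 2 := fun i j => by
    simpa [← map_ofNat C] using ((hX i).C_mul 2).mul (hX j)
  exact ((((((hX 0).pow 2).add ((hX 1).pow 2)).add ((hX 2).pow 2)).sub (hXX 0 1)).sub
    (hXX 0 2)).sub (hXX 1 2)

def nodalCubic : MvPolynomial (Fin 3) ℂ := Q * linearForm 1 2 (-4)

def threeLines : MvPolynomial (Fin 3) ℂ :=
  linearForm 1 (-1) 2 * linearForm 1 1 (-1) * linearForm 1 0 (-4)

def cubicsThroughPts : Submodule ℂ (MvPolynomial (Fin 3) ℂ) :=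
  homogeneousSubmodule (Fin 3) ℂ 3 ⊓ ⨅ i : Fin 9, LinearMap.ker (aeval (pts i)).toLinearMap

theorem mem_cubicsThroughPts {p : MvPolynomial (Fin 3) ℂ} :
    p ∈ cubicsThroughPts ↔ p.IsHomogeneous 3 ∧ ∀ i, eval (pts i) p = 0 := by
  simp [cubicsThroughPts, Submodule.mem_iInf]

theorem nodalCubic_mem_cubicsThroughPts : nodalCubic ∈ cubicsThroughPts := by
  refine mem_cubicsThroughPts.2
    ⟨isHomogeneous_Q.mul (isHomogeneous_linearForm _ _ _), fun i => ?_⟩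
  fin_cases i <;> norm_num [nodalCubic, Q, pts, Matrix.cons_val_two]

theorem threeLines_mem_cubicsThroughPts : threeLines ∈ cubicsThroughPts := by
  refine mem_cubicsThroughPts.2
    ⟨((isHomogeneous_linearForm _ _ _).mul (isHomogeneous_linearForm _ _ _)).mul
      (isHomogeneous_linearForm _ _ _), fun i => ?_⟩
  fin_cases i <;> norm_num [threeLines, pts, Matrix.cons_val_two]

theorem eq_zero_of_mem_cubicsThroughPts {p : MvPolynomial (Fin 3) ℂ}
    (hp : p ∈ cubicsThroughPts) (hx : eval ![1, 0, 0] p = 0) (hy : eval ![0, 1, 0] p = 0) :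
    p = 0 := by
  obtain ⟨hhom, hpts⟩ := mem_cubicsThroughPts.1 hp
  have h0 := (hhom.eval_ternary_cubic 0 2 1).symm.trans (hpts 0)
  have h1 := (hhom.eval_ternary_cubic 4 0 1).symm.trans (hpts 1)
  have h2 := (hhom.eval_ternary_cubic (-2) 3 1).symm.trans (hpts 2)
  have h3 := (hhom.eval_ternary_cubic 0 1 1).symm.trans (hpts 3)
  have h4 := (hhom.eval_ternary_cubic 1 0 1).symm.trans (hpts 4)
  have h5 := (hhom.eval_ternary_cubic 1 1 0).symm.trans (hpts 5)
  have h6 := (hhom.eval_ternary_cubic 1 9 4).symm.trans (hpts 6)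
  have h7 := (hhom.eval_ternary_cubic 4 9 1).symm.trans (hpts 7)
  have h8 := (hhom.eval_ternary_cubic 4 1 1).symm.trans (hpts 8)
  have h9 := (hhom.eval_ternary_cubic 1 0 0).symm.trans hx
  have h10 := (hhom.eval_ternary_cubic 0 1 0).symm.trans hy
  refine hhom.eq_sum_antidiagonalTuple.trans (Finset.sum_eq_zero fun e he => ?_)
  simp only [Finset.Nat.antidiagonalTuple_three_three, Finset.mem_insert,
    Finset.mem_singleton] at he
  rw [monomial_eq_zero]
  -- Certificates from exact Gaussian elimination on `h0`, …, `h10`.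
  rcases he with rfl | rfl | rfl | rfl | rfl | rfl | rfl | rfl | rfl | rfl
  · linear_combination h9
  · linear_combination (1/2) * h0 - (1/18) * h1 - (1/4) * h3 + (1/9) * h4 + (1/4) * h5
      - (1/180) * h6 + (1/20) * h8
  · linear_combination -(9/4) * h0 + (5/36) * h1 + (1/12) * h2 + (9/8) * h3 - (4/9) * h4
      + (1/45) * h6 - (3/40) * h8 - 3 * h9 - (3/2) * h10
  · linear_combination -(1/2) * h0 + (1/18) * h1 + (1/4) * h3 - (1/9) * h4 + (3/4) * h5
      + (1/180) * h6 - (1/20) * h8 - h9 - h10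
  · linear_combination (1/4) * h0 - (19/108) * h1 - (1/36) * h2 + (1/8) * h3 - (15/4) * h5
      - (1/180) * h6 + (1/108) * h7 + (7/40) * h8 + 3 * h9 - (1/2) * h10
  · linear_combination (45/4) * h0 - (13/36) * h1 - (5/12) * h2 - (45/8) * h3 + (17/9) * h4
      - (1/9) * h6 + (3/8) * h8 - 6 * h9 + (15/2) * h10
  · linear_combination h10
  · linear_combination -(1/27) * h1 + (1/18) * h2 - (1/4) * h3 + (2/9) * h4 - 2 * h5
      + (1/108) * h7 + 4 * h9 - 6 * h10
  · linear_combination 13 * h0 - (1/3) * h1 - (1/2) * h2 - (19/4) * h3 + (2/3) * h4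
      - (2/15) * h6 + (9/20) * h8 - 12 * h9 + 11 * h10
  · linear_combination 3 * h0 - (2/9) * h1 + (8/9) * h4 - 6 * h5 - (2/45) * h6 + (1/36) * h7
      + (3/20) * h8 + 8 * h9 - 6 * h10

theorem stmt5 :
    Module.finrank ℂ
      ↥(homogeneousSubmodule (Fin 3) ℂ 3 ⊓
        ⨅ i : Fin 9, LinearMap.ker (aeval (pts i)).toLinearMap) = 2 := by
  let κ : MvPolynomial (Fin 3) ℂ →ₗ[ℂ] ℂ × ℂ :=
    (aeval ![1, 0, 0]).toLinearMap.prod (aeval ![0, 1, 0]).toLinearMap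
  have hinj : Function.Injective (κ.domRestrict cubicsThroughPts) := by
    refine (injective_iff_map_eq_zero _).2 fun ⟨p, hp⟩ hκ => Subtype.ext ?_
    simp only [LinearMap.domRestrict_apply, Prod.ext_iff, κ] at hκ
    exact eq_zero_of_mem_cubicsThroughPts hp (by simpa using hκ.1) (by simpa using hκ.2)
  have hsurj : Function.Surjective (κ.domRestrict cubicsThroughPts) := fun ⟨a, b⟩ =>
    ⟨⟨(b / 2) • nodalCubic + (a - b / 2) • threeLines,
      add_mem (Submodule.smul_mem _ _ nodalCubic_mem_cubicsThroughPts)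
        (Submodule.smul_mem _ _ threeLines_mem_cubicsThroughPts)⟩,
      by simp [κ, nodalCubic, threeLines, Q]⟩
  exact (LinearEquiv.ofBijective _ ⟨hinj, hsurj⟩).finrank_eq.trans (by simp)
end
end

section
/- There exists a homogeneous polynomial D of degree 3 in ℂ[x,y,z] that vanishes at the nine projective points [0:2:1], [4:0:1], [−2:3:1], [0:1:1], [1:0:1], [1:1:0], [1:9:4], [4:9:1], [4:1:1] and is divisible neither by the linear form x+2y−4z nor by the quadratic form Q = x² + y² + z² − 2xy − 2xz − 2yz. -/
open MvPolynomial

noncomputable section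

/-- Our cubic: `12z³ − 22yz² + 12y²z − 2y³ − 15xz² + xyz + 2xy² + 3x²z`. -/
def Dcubic : MvPolynomial (Fin 3) ℂ :=
  C 12 * X 2 ^ 3 + C (-22) * X 1 * X 2 ^ 2 + C 12 * X 1 ^ 2 * X 2 + C (-2) * X 1 ^ 3 +
    C (-15) * X 0 * X 2 ^ 2 + C 1 * X 0 * X 1 * X 2 + C 2 * X 0 * X 1 ^ 2 + C 3 * X 0 ^ 2 * X 2

lemma evD (a b c : ℂ) : eval ![a, b, c] Dcubic =
    12*c^3 - 22*b*c^2 + 12*b^2*c - 2*b^3 - 15*a*c^2 + a*b*c + 2*a*b^2 + 3*a^2*c := by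
  simp [Dcubic]; ring

lemma Dhom : (Dcubic).IsHomogeneous 3 := by
  have h : ∀ (c : ℂ) (a b d : ℕ), a + b + d = 3 →
      (C c * X 0 ^ a * X 1 ^ b * X (2 : Fin 3) ^ d).IsHomogeneous 3 := by
    intro c a b d habd
    have := (((isHomogeneous_C _ c).mul ((isHomogeneous_X _ (0 : Fin 3)).pow a)).mul
      ((isHomogeneous_X _ (1 : Fin 3)).pow b)).mul ((isHomogeneous_X _ (2 : Fin 3)).pow d)
    simpa [habd] using this
  have e : Dcubic =
      C 12 * X 0 ^ 0 * X 1 ^ 0 * X 2 ^ 3 + C (-22) * X 0 ^ 0 * X 1 ^ 1 * X 2 ^ 2 +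
      C 12 * X 0 ^ 0 * X 1 ^ 2 * X 2 ^ 1 + C (-2) * X 0 ^ 0 * X 1 ^ 3 * X 2 ^ 0 +
      C (-15) * X 0 ^ 1 * X 1 ^ 0 * X 2 ^ 2 + C 1 * X 0 ^ 1 * X 1 ^ 1 * X 2 ^ 1 +
      C 2 * X 0 ^ 1 * X 1 ^ 2 * X 2 ^ 0 + C 3 * X 0 ^ 2 * X 1 ^ 0 * X 2 ^ 1 := by
    unfold Dcubic; ring
  rw [e]
  exact (((((((h 12 0 0 3 rfl).add (h (-22) 0 1 2 rfl)).add (h 12 0 2 1 rfl)).add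
    (h (-2) 0 3 0 rfl)).add (h (-15) 1 0 2 rfl)).add (h 1 1 1 1 rfl)).add
    (h 2 1 2 0 rfl)).add (h 3 2 0 1 rfl)

theorem stmt15 :
    ∃ D : MvPolynomial (Fin 3) ℂ, D.IsHomogeneous 3 ∧
      (∀ i : Fin 9, eval (pts i) D = 0) ∧
      ¬ ((X 0 + 2 * X 1 - 4 * X 2) ∣ D) ∧ ¬ (Q ∣ D) := by
  refine ⟨Dcubic, Dhom, ?_, ?_, ?_⟩
  · intro i
    fin_cases i
    · show eval ![(0:ℂ),2,1] Dcubic = 0; rw [evD]; norm_num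
    · show eval ![(4:ℂ),0,1] Dcubic = 0; rw [evD]; norm_num
    · show eval ![(-2:ℂ),3,1] Dcubic = 0; rw [evD]; norm_num
    · show eval ![(0:ℂ),1,1] Dcubic = 0; rw [evD]; norm_num
    · show eval ![(1:ℂ),0,1] Dcubic = 0; rw [evD]; norm_num
    · show eval ![(1:ℂ),1,0] Dcubic = 0; rw [evD]; norm_num
    · show eval ![(1:ℂ),9,4] Dcubic = 0; rw [evD]; norm_num
    · show eval ![(4:ℂ),9,1] Dcubic = 0; rw [evD]; norm_num
    · show eval ![(4:ℂ),1,1] Dcubic = 0; rw [evD]; norm_num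
  · rintro ⟨c, hc⟩
    have h := congrArg (eval ![(-6 : ℂ), 5, 1]) hc
    rw [map_mul, evD] at h
    have hL : eval ![(-6 : ℂ), 5, 1] (X 0 + 2 * X 1 - 4 * X 2 : MvPolynomial (Fin 3) ℂ) = 0 := by
      simp; ring
    rw [hL, zero_mul] at h
    norm_num at h
  · rintro ⟨c, hc⟩
    have h := congrArg (eval ![(9 : ℂ), 4, 1]) hc
    rw [map_mul, evD] at h
    have hQ : eval ![(9 : ℂ), 4, 1] Q = 0 := by
      simp [Q]; ring
    rw [hQ, zero_mul] at h
    norm_num at h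
end
end
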